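/- arXiv:1810.03596 — 2 statements merged into one kernel-verified Lean document; each statement's English description precedes it below -/
import Mathlib

section
/- There exists an absolute constant C > 0 with the following property. Let η, f, g, h : [0,∞) → [0,∞) be continuous functions with η continuously differentiable, and suppose η(t) η'(t) + h(t) ≤ f(t) + g(t) η(t) for all t ≥ 0. Then for all t ≥ 0, η(t)² + 2∫₀ᵗ h(s) ds ≤ C [ η(0)² + ∫₀ᵗ f(s) ds + (∫₀ᵗ g(s) ds)² ]. -/
open Set MeasureTheory intervalIntegral

/-- Gronwall-type lemma: if η η' + h ≤ f + g η on [0,∞) (η, f, g, h ≥ 0, η ∈ C¹,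
f, g, h continuous), then η(t)² + 2∫₀ᵗ h ≤ C [η(0)² + ∫₀ᵗ f + (∫₀ᵗ g)²]
for an absolute constant C. -/
theorem statement2 :
    ∃ C > (0:ℝ), ∀ η η' f g h : ℝ → ℝ,
      (∀ t ∈ Ici (0:ℝ), 0 ≤ η t) → (∀ t ∈ Ici (0:ℝ), 0 ≤ f t) →
      (∀ t ∈ Ici (0:ℝ), 0 ≤ g t) → (∀ t ∈ Ici (0:ℝ), 0 ≤ h t) →
      ContinuousOn f (Ici 0) → ContinuousOn g (Ici 0) → ContinuousOn h (Ici 0) →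
      ContinuousOn η' (Ici 0) →
      (∀ t ∈ Ici (0:ℝ), HasDerivWithinAt η (η' t) (Ici 0) t) →
      (∀ t ∈ Ici (0:ℝ), η t * η' t + h t ≤ f t + g t * η t) →
      ∀ t ∈ Ici (0:ℝ),
        η t ^ 2 + 2 * ∫ s in (0:ℝ)..t, h s ≤
          C * (η 0 ^ 2 + (∫ s in (0:ℝ)..t, f s) + (∫ s in (0:ℝ)..t, g s) ^ 2) := by
  refine ⟨6, by norm_num, ?_⟩
  intro η η' f g h hη hf hg hh hfc hgc hhc hη'c hderiv hineq t ht
  have ht0 : (0:ℝ) ≤ t := ht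
  have hηc : ContinuousOn η (Ici 0) := fun x hx => (hderiv x hx).continuousWithinAt
  -- interval integrability helper
  have intOn : ∀ (φ : ℝ → ℝ), ContinuousOn φ (Ici 0) → ∀ σ : ℝ, 0 ≤ σ →
      IntervalIntegrable φ volume 0 σ := by
    intro φ hφ σ hσ
    exact (hφ.mono (by rw [uIcc_of_le hσ]; exact Icc_subset_Ici_self)).intervalIntegrable
  -- max of η on [0,t]
  obtain ⟨τ, hτ, hmax⟩ := isCompact_Icc.exists_isMaxOn ⟨0, left_mem_Icc.mpr ht0⟩
    (hηc.mono Icc_subset_Ici_self)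
  set M := η τ with hM
  have hM0 : 0 ≤ M := hη τ hτ.1
  -- key inequality for all σ ∈ [0,t]
  have key : ∀ σ ∈ Icc (0:ℝ) t,
      η σ ^ 2 + 2 * ∫ s in (0:ℝ)..σ, h s ≤
        η 0 ^ 2 + 2 * (∫ s in (0:ℝ)..σ, f s) + 2 * M * ∫ s in (0:ℝ)..σ, g s := by
    intro σ hσ
    have h0σ : (0:ℝ) ≤ σ := hσ.1
    have hsub : Icc (0:ℝ) σ ⊆ Ici 0 := Icc_subset_Ici_self
    -- FTC for η^2
    have hftc : ∫ s in (0:ℝ)..σ, 2 * η s * η' s = η σ ^ 2 - η 0 ^ 2 := by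
      refine integral_eq_sub_of_hasDeriv_right_of_le h0σ
        ((hηc.mono hsub).pow 2) (fun x hx => ?_) ?_
      · have hx0 : (0:ℝ) < x := hx.1
        have hd : HasDerivAt η (η' x) x :=
          (hderiv x hx0.le).hasDerivAt (Ici_mem_nhds hx0)
        have := (hd.pow 2).hasDerivWithinAt (s := Ioi x)
        simpa [mul_comm, mul_assoc, mul_left_comm] using this
      · exact intOn _ ((continuousOn_const.mul hηc).mul hη'c) σ h0σ
    have int_ηη' : IntervalIntegrable (fun s => η s * η' s) volume 0 σ :=
      intOn _ (hηc.mul hη'c) σ h0σ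
    have int_h : IntervalIntegrable h volume 0 σ := intOn _ hhc σ h0σ
    have int_f : IntervalIntegrable f volume 0 σ := intOn _ hfc σ h0σ
    have int_g : IntervalIntegrable g volume 0 σ := intOn _ hgc σ h0σ
    have int_gη : IntervalIntegrable (fun s => g s * η s) volume 0 σ :=
      intOn _ (hgc.mul hηc) σ h0σ
    -- integrate the hypothesis
    have hmono : (∫ s in (0:ℝ)..σ, (η s * η' s + h s)) ≤
        ∫ s in (0:ℝ)..σ, (f s + g s * η s) := by
      refine integral_mono_on h0σ (int_ηη'.add int_h) (int_f.add int_gη) ?_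
      intro s hs
      exact hineq s hs.1
    have hgM : (∫ s in (0:ℝ)..σ, g s * η s) ≤ M * ∫ s in (0:ℝ)..σ, g s := by
      have : (∫ s in (0:ℝ)..σ, g s * η s) ≤ ∫ s in (0:ℝ)..σ, g s * M := by
        refine integral_mono_on h0σ int_gη (int_g.mul_const M) ?_
        intro s hs
        exact mul_le_mul_of_nonneg_left (hmax ⟨hs.1, hs.2.trans hσ.2⟩) (hg s hs.1)
      simpa [intervalIntegral.integral_mul_const, mul_comm] using this
    have hadd1 : (∫ s in (0:ℝ)..σ, (η s * η' s + h s)) =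
        (∫ s in (0:ℝ)..σ, η s * η' s) + ∫ s in (0:ℝ)..σ, h s :=
      integral_add int_ηη' int_h
    have hadd2 : (∫ s in (0:ℝ)..σ, (f s + g s * η s)) =
        (∫ s in (0:ℝ)..σ, f s) + ∫ s in (0:ℝ)..σ, g s * η s :=
      integral_add int_f int_gη
    have h2 : (∫ s in (0:ℝ)..σ, 2 * η s * η' s) = 2 * ∫ s in (0:ℝ)..σ, η s * η' s := by
      rw [← intervalIntegral.integral_const_mul]
      congr 1; ext s; ring
    have := hftc
    rw [h2] at this
    nlinarith [hmono, hgM, hadd1, hadd2]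
  -- integrals over [0,t] dominate those over [0,τ]
  have monoInt : ∀ (φ : ℝ → ℝ), ContinuousOn φ (Ici 0) → (∀ s ∈ Ici (0:ℝ), 0 ≤ φ s) →
      (∫ s in (0:ℝ)..τ, φ s) ≤ ∫ s in (0:ℝ)..t, φ s := by
    intro φ hφc hφ0
    refine integral_mono_interval le_rfl hτ.1 hτ.2 ?_ (intOn _ hφc t ht0)
    refine (ae_restrict_iff' measurableSet_Ioc).mpr (ae_of_all _ fun s hs => hφ0 s hs.1.le)
  have intNonneg : ∀ (φ : ℝ → ℝ), (∀ s ∈ Ici (0:ℝ), 0 ≤ φ s) → ∀ σ : ℝ, 0 ≤ σ →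
      (0:ℝ) ≤ ∫ s in (0:ℝ)..σ, φ s := by
    intro φ hφ0 σ hσ
    exact intervalIntegral.integral_nonneg hσ (fun s hs => hφ0 s hs.1)
  set F := ∫ s in (0:ℝ)..t, f s
  set G := ∫ s in (0:ℝ)..t, g s
  have hG0 : 0 ≤ G := intNonneg g hg t ht0
  have hF0 : 0 ≤ F := intNonneg f hf t ht0
  have hHτ : 0 ≤ ∫ s in (0:ℝ)..τ, h s := intNonneg h hh τ hτ.1
  have hFτ : (∫ s in (0:ℝ)..τ, f s) ≤ F := monoInt f hfc hf
  have hGτ : (∫ s in (0:ℝ)..τ, g s) ≤ G := monoInt g hgc hg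
  -- bound on M
  have hMsq : M ^ 2 ≤ η 0 ^ 2 + 2 * F + 2 * M * G := by
    have := key τ hτ
    nlinarith [mul_le_mul_of_nonneg_left hGτ (by linarith : (0:ℝ) ≤ 2 * M)]
  have := key t ⟨ht0, le_rfl⟩
  nlinarith [sq_nonneg (M - 2 * G), sq_nonneg (η 0), sq_nonneg G, sq_nonneg M]
end

section
/- Let Ω = [0,L]² × [0,1] be the fundamental periodic domain. There is a constant C > 0 (depending only on Ω) such that for all space-periodic w, θ ∈ H¹(Ω), ∫_Ω | w(x,y,z) \overline{wθ}(z) |² dx dy dz ≤ C ‖w‖_{H¹}⁴ ‖θ‖_{H¹}², where \overline{wθ}(z) = L^{-2} ∫_{[0,L]²} w θ dx dy is the horizontal mean of the product. -/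
open MeasureTheory Set Function

namespace RRC

/-- partial derivative in the first (x) variable -/
noncomputable def px (f : ℝ → ℝ → ℝ → ℝ) : ℝ → ℝ → ℝ → ℝ :=
  fun x y z => deriv (fun t => f t y z) x

/-- partial derivative in the second (y) variable -/
noncomputable def py (f : ℝ → ℝ → ℝ → ℝ) : ℝ → ℝ → ℝ → ℝ :=
  fun x y z => deriv (fun t => f x t z) y

/-- partial derivative in the third (z, vertical) variable -/
noncomputable def pz (f : ℝ → ℝ → ℝ → ℝ) : ℝ → ℝ → ℝ → ℝ :=
  fun x y z => deriv (fun t => f x y t) z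

/-- integral over the fundamental periodic domain Ω = [0,L]² × [0,1] -/
noncomputable def intBox (L : ℝ) (f : ℝ → ℝ → ℝ → ℝ) : ℝ :=
  ∫ x in Icc (0:ℝ) L, ∫ y in Icc (0:ℝ) L, ∫ z in Icc (0:ℝ) 1, f x y z

/-- L²(Ω) norm -/
noncomputable def l2 (L : ℝ) (f : ℝ → ℝ → ℝ → ℝ) : ℝ :=
  Real.sqrt (intBox L (fun x y z => (f x y z) ^ 2))

/-- L²(Ω) norm of the horizontal gradient ∇_h f -/
noncomputable def l2h (L : ℝ) (f : ℝ → ℝ → ℝ → ℝ) : ℝ :=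
  Real.sqrt (intBox L (fun x y z => (px f x y z) ^ 2 + (py f x y z) ^ 2))

/-- space-periodicity on Ω = [0,L]² × [0,1] -/
def Per (L : ℝ) (f : ℝ → ℝ → ℝ → ℝ) : Prop :=
  (∀ y z, Periodic (fun x => f x y z) L) ∧
  (∀ x z, Periodic (fun y => f x y z) L) ∧
  (∀ x y, Periodic (fun z => f x y z) 1)

/-- smoothness (as a function of all three variables jointly) -/
def Smooth3 (f : ℝ → ℝ → ℝ → ℝ) : Prop :=
  ContDiff ℝ (⊤ : ℕ∞) (fun p : ℝ × ℝ × ℝ => f p.1 p.2.1 p.2.2)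

/-- horizontal mean:  \bar f(z) = L⁻² ∫_{[0,L]²} f(x,y,z) dx dy -/
noncomputable def mh (L : ℝ) (f : ℝ → ℝ → ℝ → ℝ) (z : ℝ) : ℝ :=
  (1 / L ^ 2) * ∫ x in Icc (0:ℝ) L, ∫ y in Icc (0:ℝ) L, f x y z

/-- H¹(Ω) norm -/
noncomputable def h1 (L : ℝ) (f : ℝ → ℝ → ℝ → ℝ) : ℝ :=
  Real.sqrt (intBox L (fun x y z =>
    (f x y z) ^ 2 + (px f x y z) ^ 2 + (py f x y z) ^ 2 + (pz f x y z) ^ 2))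

end RRC

namespace RRC

set_option maxHeartbeats 2000000

/-! ### Auxiliary lemmas -/

section Aux

variable {f : ℝ → ℝ → ℝ → ℝ}

private lemma cont_of_smooth (hf : Smooth3 f) :
    Continuous fun p : ℝ × ℝ × ℝ => f p.1 p.2.1 p.2.2 := hf.continuous

private lemma cont_px (hf : Smooth3 f) :
    Continuous fun p : ℝ × ℝ × ℝ => px f p.1 p.2.1 p.2.2 := by
  have hdiff := hf.differentiable (by simp)
  have heq : ∀ p : ℝ × ℝ × ℝ, px f p.1 p.2.1 p.2.2
      = fderiv ℝ (fun p : ℝ × ℝ × ℝ => f p.1 p.2.1 p.2.2) p (1, 0, 0) := by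
    intro p
    have hγ : HasDerivAt (fun t : ℝ => ((t, p.2.1, p.2.2) : ℝ × ℝ × ℝ))
        ((1 : ℝ), (0 : ℝ), (0 : ℝ)) p.1 :=
      HasDerivAt.prodMk (hasDerivAt_id p.1) (hasDerivAt_const _ _)
    exact ((hdiff p).hasFDerivAt.comp_hasDerivAt p.1 hγ).deriv
  rw [show (fun p : ℝ × ℝ × ℝ => px f p.1 p.2.1 p.2.2)
      = fun p => fderiv ℝ (fun p : ℝ × ℝ × ℝ => f p.1 p.2.1 p.2.2) p (1, 0, 0) from funext heq]
  exact (hf.continuous_fderiv (by simp)).clm_apply continuous_const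

private lemma cont_py (hf : Smooth3 f) :
    Continuous fun p : ℝ × ℝ × ℝ => py f p.1 p.2.1 p.2.2 := by
  have hdiff := hf.differentiable (by simp)
  have heq : ∀ p : ℝ × ℝ × ℝ, py f p.1 p.2.1 p.2.2
      = fderiv ℝ (fun p : ℝ × ℝ × ℝ => f p.1 p.2.1 p.2.2) p (0, 1, 0) := by
    intro p
    have hγ : HasDerivAt (fun t : ℝ => ((p.1, t, p.2.2) : ℝ × ℝ × ℝ))
        ((0 : ℝ), (1 : ℝ), (0 : ℝ)) p.2.1 :=
      HasDerivAt.prodMk (hasDerivAt_const _ _) (HasDerivAt.prodMk (hasDerivAt_id _) (hasDerivAt_const _ _))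
    exact ((hdiff p).hasFDerivAt.comp_hasDerivAt p.2.1 hγ).deriv
  rw [show (fun p : ℝ × ℝ × ℝ => py f p.1 p.2.1 p.2.2)
      = fun p => fderiv ℝ (fun p : ℝ × ℝ × ℝ => f p.1 p.2.1 p.2.2) p (0, 1, 0) from funext heq]
  exact (hf.continuous_fderiv (by simp)).clm_apply continuous_const

private lemma hasDerivAt_pz (hf : Smooth3 f) (x y z : ℝ) :
    HasDerivAt (fun t => f x y t) (pz f x y z) z := by
  have hγ : HasDerivAt (fun t : ℝ => ((x, y, t) : ℝ × ℝ × ℝ))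
      ((0 : ℝ), (0 : ℝ), (1 : ℝ)) z :=
    HasDerivAt.prodMk (hasDerivAt_const _ _) (HasDerivAt.prodMk (hasDerivAt_const _ _) (hasDerivAt_id _))
  have h := ((hf.differentiable (by simp) (x, y, z)).hasFDerivAt).comp_hasDerivAt z hγ
  have h2 : pz f x y z = fderiv ℝ (fun p : ℝ × ℝ × ℝ => f p.1 p.2.1 p.2.2) (x, y, z)
      (0, 0, 1) := h.deriv
  rw [h2]
  exact h

private lemma cont_pz (hf : Smooth3 f) :
    Continuous fun p : ℝ × ℝ × ℝ => pz f p.1 p.2.1 p.2.2 := by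
  have heq : ∀ p : ℝ × ℝ × ℝ, pz f p.1 p.2.1 p.2.2
      = fderiv ℝ (fun p : ℝ × ℝ × ℝ => f p.1 p.2.1 p.2.2) p (0, 0, 1) := by
    intro p
    have hγ : HasDerivAt (fun t : ℝ => ((p.1, p.2.1, t) : ℝ × ℝ × ℝ)) ((0 : ℝ), (0 : ℝ), (1 : ℝ)) p.2.2 :=
      HasDerivAt.prodMk (hasDerivAt_const _ _) (HasDerivAt.prodMk (hasDerivAt_const _ _) (hasDerivAt_id _))
    have hh := (hf.differentiable (by simp) p).hasFDerivAt.comp_hasDerivAt p.2.2 hγ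
    exact (hasDerivAt_pz hf p.1 p.2.1 p.2.2).deriv.symm.trans hh.deriv
  rw [show (fun p : ℝ × ℝ × ℝ => pz f p.1 p.2.1 p.2.2)
      = fun p => fderiv ℝ (fun p : ℝ × ℝ × ℝ => f p.1 p.2.1 p.2.2) p (0, 0, 1) from funext heq]
  exact (hf.continuous_fderiv (by simp)).clm_apply continuous_const

/-! ### Representation of `intBox` as integrals over product sets -/

private lemma integrableOn_inner {L : ℝ} {ψ : (ℝ × ℝ) × ℝ → ℝ} (hψ : Continuous ψ) :
    IntegrableOn (fun q : ℝ × ℝ => ∫ z in Icc (0:ℝ) 1, ψ (q, z))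
      (Icc (0:ℝ) L ×ˢ Icc (0:ℝ) L) := by
  have hint2 : Integrable ψ
      ((volume.restrict (Icc (0:ℝ) L ×ˢ Icc (0:ℝ) L)).prod (volume.restrict (Icc (0:ℝ) 1))) := by
    rw [Measure.prod_restrict, ← Measure.volume_eq_prod]
    exact hψ.continuousOn.integrableOn_compact
      ((isCompact_Icc.prod isCompact_Icc).prod isCompact_Icc)
  exact hint2.integral_prod_left

private lemma intBox_rep21 {L : ℝ} (f : ℝ → ℝ → ℝ → ℝ)
    (hf : Continuous fun p : ℝ × ℝ × ℝ => f p.1 p.2.1 p.2.2) :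
    intBox L f = ∫ q in Icc (0:ℝ) L ×ˢ Icc (0:ℝ) L, ∫ z in Icc (0:ℝ) 1, f q.1 q.2 z := by
  have hψ : Continuous fun p : (ℝ × ℝ) × ℝ => f p.1.1 p.1.2 p.2 :=
    hf.comp ((continuous_fst.comp continuous_fst).prodMk ((continuous_snd.comp continuous_fst).prodMk continuous_snd))
  have hg : IntegrableOn (fun q : ℝ × ℝ => ∫ z in Icc (0:ℝ) 1, f q.1 q.2 z)
      (Icc (0:ℝ) L ×ˢ Icc (0:ℝ) L) := integrableOn_inner (ψ := fun p => f p.1.1 p.1.2 p.2) hψ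
  have hg' : IntegrableOn (fun q : ℝ × ℝ => ∫ z in Icc (0:ℝ) 1, f q.1 q.2 z)
      (Icc (0:ℝ) L ×ˢ Icc (0:ℝ) L) ((volume : Measure ℝ).prod volume) := by
    rwa [← Measure.volume_eq_prod]
  calc intBox L f
      = ∫ q in Icc (0:ℝ) L ×ˢ Icc (0:ℝ) L,
          (fun q : ℝ × ℝ => ∫ z in Icc (0:ℝ) 1, f q.1 q.2 z) q
          ∂((volume : Measure ℝ).prod volume) := (setIntegral_prod _ hg').symm
    _ = ∫ q in Icc (0:ℝ) L ×ˢ Icc (0:ℝ) L, ∫ z in Icc (0:ℝ) 1, f q.1 q.2 z := by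
          rw [← Measure.volume_eq_prod]

private lemma intBox_rep3 {L : ℝ} (f : ℝ → ℝ → ℝ → ℝ)
    (hf : Continuous fun p : ℝ × ℝ × ℝ => f p.1 p.2.1 p.2.2) :
    intBox L f = ∫ p in (Icc (0:ℝ) L ×ˢ Icc (0:ℝ) L) ×ˢ Icc (0:ℝ) 1,
      f p.1.1 p.1.2 p.2 := by
  have hψ : Continuous fun p : (ℝ × ℝ) × ℝ => f p.1.1 p.1.2 p.2 :=
    hf.comp ((continuous_fst.comp continuous_fst).prodMk ((continuous_snd.comp continuous_fst).prodMk continuous_snd))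
  have hint : IntegrableOn (fun p : (ℝ × ℝ) × ℝ => f p.1.1 p.1.2 p.2)
      ((Icc (0:ℝ) L ×ˢ Icc (0:ℝ) L) ×ˢ Icc (0:ℝ) 1)
      ((volume : Measure (ℝ × ℝ)).prod volume) := by
    rw [← Measure.volume_eq_prod]
    exact hψ.continuousOn.integrableOn_compact
      ((isCompact_Icc.prod isCompact_Icc).prod isCompact_Icc)
  calc intBox L f
      = ∫ q in Icc (0:ℝ) L ×ˢ Icc (0:ℝ) L, ∫ z in Icc (0:ℝ) 1, f q.1 q.2 z :=
        intBox_rep21 f hf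
    _ = ∫ p in (Icc (0:ℝ) L ×ˢ Icc (0:ℝ) L) ×ˢ Icc (0:ℝ) 1, f p.1.1 p.1.2 p.2
          ∂((volume : Measure (ℝ × ℝ)).prod volume) := (setIntegral_prod _ hint).symm
    _ = ∫ p in (Icc (0:ℝ) L ×ˢ Icc (0:ℝ) L) ×ˢ Icc (0:ℝ) 1, f p.1.1 p.1.2 p.2 := by
          rw [← Measure.volume_eq_prod]

private lemma intBox_mono {L : ℝ} {f g : ℝ → ℝ → ℝ → ℝ}
    (hf : Continuous fun p : ℝ × ℝ × ℝ => f p.1 p.2.1 p.2.2)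
    (hg : Continuous fun p : ℝ × ℝ × ℝ => g p.1 p.2.1 p.2.2)
    (h : ∀ x y z, x ∈ Icc (0:ℝ) L → y ∈ Icc (0:ℝ) L → z ∈ Icc (0:ℝ) 1 → f x y z ≤ g x y z) :
    intBox L f ≤ intBox L g := by
  rw [intBox_rep3 f hf, intBox_rep3 g hg]
  refine setIntegral_mono_on ?_ ?_ ?_ ?_
  · exact (hf.comp (by fun_prop : Continuous fun p : (ℝ × ℝ) × ℝ =>
      ((p.1.1, p.1.2, p.2) : ℝ × ℝ × ℝ))).continuousOn.integrableOn_compact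
      ((isCompact_Icc.prod isCompact_Icc).prod isCompact_Icc)
  · exact (hg.comp (by fun_prop : Continuous fun p : (ℝ × ℝ) × ℝ =>
      ((p.1.1, p.1.2, p.2) : ℝ × ℝ × ℝ))).continuousOn.integrableOn_compact
      ((isCompact_Icc.prod isCompact_Icc).prod isCompact_Icc)
  · exact ((measurableSet_Icc.prod measurableSet_Icc).prod measurableSet_Icc)
  · intro p hp
    exact h p.1.1 p.1.2 p.2 hp.1.1 hp.1.2 hp.2

private lemma intBox_nonneg {L : ℝ} {f : ℝ → ℝ → ℝ → ℝ} (h : ∀ x y z, 0 ≤ f x y z) :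
    0 ≤ intBox L f := by
  refine setIntegral_nonneg measurableSet_Icc fun x _ => ?_
  refine setIntegral_nonneg measurableSet_Icc fun y _ => ?_
  exact setIntegral_nonneg measurableSet_Icc fun z _ => h x y z

private lemma intBox_const_mul (L c : ℝ) (f : ℝ → ℝ → ℝ → ℝ) :
    intBox L (fun x y z => c * f x y z) = c * intBox L f := by
  unfold intBox
  simp_rw [integral_const_mul]

private lemma mh_rep {L : ℝ} (f : ℝ → ℝ → ℝ → ℝ)
    (hf : Continuous fun p : ℝ × ℝ × ℝ => f p.1 p.2.1 p.2.2) (z : ℝ) :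
    mh L f z = (1 / L ^ 2) * ∫ q in Icc (0:ℝ) L ×ˢ Icc (0:ℝ) L, f q.1 q.2 z := by
  unfold mh
  congr 1
  have hint : IntegrableOn (fun q : ℝ × ℝ => f q.1 q.2 z)
      (Icc (0:ℝ) L ×ˢ Icc (0:ℝ) L) ((volume : Measure ℝ).prod volume) := by
    rw [← Measure.volume_eq_prod]
    exact (hf.comp (by fun_prop : Continuous fun q : ℝ × ℝ =>
      ((q.1, q.2, z) : ℝ × ℝ × ℝ))).continuousOn.integrableOn_compact
      (isCompact_Icc.prod isCompact_Icc)
  calc ∫ x in Icc (0:ℝ) L, ∫ y in Icc (0:ℝ) L, f x y z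
      = ∫ q in Icc (0:ℝ) L ×ˢ Icc (0:ℝ) L, (fun q : ℝ × ℝ => f q.1 q.2 z) q
        ∂((volume : Measure ℝ).prod volume) := (setIntegral_prod _ hint).symm
    _ = ∫ q in Icc (0:ℝ) L ×ˢ Icc (0:ℝ) L, f q.1 q.2 z := by rw [← Measure.volume_eq_prod]

/-! ### 1D Agmon-type inequality -/

private lemma agmon1d {g g' : ℝ → ℝ} (hc : Continuous g) (hc' : Continuous g')
    (hd : ∀ t, HasDerivAt g (g' t) t) {z : ℝ} (hz : z ∈ Icc (0:ℝ) 1) :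
    g z ^ 2 ≤ ∫ s in Icc (0:ℝ) 1, (g s ^ 2 + |2 * g s * g' s|) := by
  set D : ℝ → ℝ := fun t => 2 * g t * g' t with hD
  have hDc : Continuous D := by fun_prop
  have hsq : ∀ t, HasDerivAt (fun t => g t ^ 2) (D t) t := by
    intro t
    have := (hd t).fun_pow 2
    simpa [hD, mul_comm, mul_assoc, mul_left_comm] using this
  have hKint : IntegrableOn (fun t => |D t|) (Icc (0:ℝ) 1) :=
    hDc.abs.continuousOn.integrableOn_compact isCompact_Icc
  have key : ∀ s ∈ Icc (0:ℝ) 1, g z ^ 2 ≤ g s ^ 2 + ∫ t in Icc (0:ℝ) 1, |D t| := by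
    intro s hs
    have hftc : ∫ t in s..z, D t = g z ^ 2 - g s ^ 2 :=
      intervalIntegral.integral_eq_sub_of_hasDerivAt (fun t _ => hsq t)
        (hDc.intervalIntegrable s z)
    have h1 : g z ^ 2 - g s ^ 2 ≤ |∫ t in s..z, D t| := hftc ▸ le_abs_self _
    have h2 : |∫ t in s..z, D t| ≤ ∫ t in Set.uIoc s z, |D t| := by
      simpa [Real.norm_eq_abs] using
        intervalIntegral.norm_integral_le_integral_norm_uIoc (a := s) (b := z) (f := D)
    have hsub : Set.uIoc s z ⊆ Icc (0:ℝ) 1 := by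
      intro t ht
      rcases Set.mem_uIoc.1 ht with h | h
      · exact ⟨le_trans hs.1 (le_of_lt h.1), le_trans h.2 hz.2⟩
      · exact ⟨le_trans hz.1 (le_of_lt h.1), le_trans h.2 hs.2⟩
    have h3 : ∫ t in Set.uIoc s z, |D t| ≤ ∫ t in Icc (0:ℝ) 1, |D t| :=
      setIntegral_mono_set hKint
        (Filter.Eventually.of_forall fun t => abs_nonneg _)
        (Filter.Eventually.of_forall hsub)
    linarith
  have hvol : (volume (Icc (0:ℝ) 1)).toReal = 1 := by
    simp [Real.volume_Icc]
  have hint1 : IntegrableOn (fun s => g s ^ 2) (Icc (0:ℝ) 1) :=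
    (hc.pow 2).continuousOn.integrableOn_compact isCompact_Icc
  calc g z ^ 2 = ∫ _ in Icc (0:ℝ) 1, g z ^ 2 := by
        rw [setIntegral_const, measureReal_def, hvol, one_smul]
    _ ≤ ∫ s in Icc (0:ℝ) 1, (g s ^ 2 + ∫ t in Icc (0:ℝ) 1, |D t|) := by
        refine setIntegral_mono_on (integrableOn_const ?_)
          (hint1.add (integrableOn_const ?_)) measurableSet_Icc key
        · simp [Real.volume_Icc]
        · simp [Real.volume_Icc]
    _ = (∫ s in Icc (0:ℝ) 1, g s ^ 2) + ∫ t in Icc (0:ℝ) 1, |D t| := by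
        rw [integral_add hint1 (integrableOn_const (by simp [Real.volume_Icc]))]
        rw [setIntegral_const, measureReal_def, hvol, one_smul]
    _ = ∫ s in Icc (0:ℝ) 1, (g s ^ 2 + |D s|) :=
        (integral_add hint1 hKint).symm

/-! ### Cauchy–Schwarz -/

private lemma memL2_of_continuous {u : ℝ × ℝ → ℝ} (hu : Continuous u) {s : Set (ℝ × ℝ)}
    (hs : IsCompact s) (hms : MeasurableSet s) : MemLp u 2 (volume.restrict s) := by
  haveI : IsFiniteMeasure (volume.restrict s : Measure (ℝ × ℝ)) :=
    ⟨by rw [Measure.restrict_apply_univ]; exact hs.measure_lt_top⟩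
  obtain ⟨Cb, hCb⟩ : ∃ C, ∀ q ∈ s, ‖u q‖ ≤ C :=
    hs.exists_bound_of_continuousOn hu.continuousOn
  exact (memLp_top_of_bound hu.aestronglyMeasurable Cb
    ((ae_restrict_iff' hms).2 (Filter.Eventually.of_forall hCb))).mono_exponent (mod_cast le_top)

private lemma sq_integral_mul_le {α : Type*} [MeasurableSpace α] {μ : Measure α} {u v : α → ℝ}
    (hu : MemLp u 2 μ) (hv : MemLp v 2 μ) :
    (∫ a, u a * v a ∂μ) ^ 2 ≤ (∫ a, u a ^ 2 ∂μ) * (∫ a, v a ^ 2 ∂μ) := by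
  have hpq : Real.HolderConjugate 2 2 := Real.HolderConjugate.two_two
  have h2 : ENNReal.ofReal (2:ℝ) = 2 := by norm_num
  have hu' : MemLp u (ENNReal.ofReal (2:ℝ)) μ := by rwa [h2]
  have hv' : MemLp v (ENNReal.ofReal (2:ℝ)) μ := by rwa [h2]
  have key := integral_mul_norm_le_Lp_mul_Lq hpq hu' hv'
  have hXeq : (∫ a, ‖u a‖ ^ (2:ℝ) ∂μ) = ∫ a, u a ^ 2 ∂μ := by
    refine integral_congr_ae (Filter.Eventually.of_forall fun a => ?_)
    show ‖u a‖ ^ (2:ℝ) = u a ^ 2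
    rw [show (2:ℝ) = ((2:ℕ):ℝ) by norm_num, Real.rpow_natCast, Real.norm_eq_abs, sq_abs]
  have hYeq : (∫ a, ‖v a‖ ^ (2:ℝ) ∂μ) = ∫ a, v a ^ 2 ∂μ := by
    refine integral_congr_ae (Filter.Eventually.of_forall fun a => ?_)
    show ‖v a‖ ^ (2:ℝ) = v a ^ 2
    rw [show (2:ℝ) = ((2:ℕ):ℝ) by norm_num, Real.rpow_natCast, Real.norm_eq_abs, sq_abs]
  rw [hXeq, hYeq] at key
  have hX0 : 0 ≤ ∫ a, u a ^ 2 ∂μ := integral_nonneg fun a => sq_nonneg _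
  have hY0 : 0 ≤ ∫ a, v a ^ 2 ∂μ := integral_nonneg fun a => sq_nonneg _
  have habs : |∫ a, u a * v a ∂μ|
      ≤ (∫ a, u a ^ 2 ∂μ) ^ ((1:ℝ)/2) * (∫ a, v a ^ 2 ∂μ) ^ ((1:ℝ)/2) := by
    calc |∫ a, u a * v a ∂μ| ≤ ∫ a, ‖u a‖ * ‖v a‖ ∂μ := by
          simpa [Real.norm_eq_abs, abs_mul] using
            norm_integral_le_integral_norm (μ := μ) (fun a => u a * v a)
      _ ≤ _ := key
  calc (∫ a, u a * v a ∂μ) ^ 2 = |∫ a, u a * v a ∂μ| ^ 2 := (sq_abs _).symm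
    _ ≤ ((∫ a, u a ^ 2 ∂μ) ^ ((1:ℝ)/2) * (∫ a, v a ^ 2 ∂μ) ^ ((1:ℝ)/2)) ^ 2 :=
        pow_le_pow_left₀ (abs_nonneg _) habs 2
    _ = (∫ a, u a ^ 2 ∂μ) * (∫ a, v a ^ 2 ∂μ) := by
        rw [mul_pow, ← Real.rpow_natCast ((∫ a, u a ^ 2 ∂μ) ^ ((1:ℝ)/2)) 2,
          ← Real.rpow_natCast ((∫ a, v a ^ 2 ∂μ) ^ ((1:ℝ)/2)) 2,
          ← Real.rpow_mul hX0, ← Real.rpow_mul hY0]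
        norm_num

end Aux

private lemma slice_bound {L : ℝ} {w : ℝ → ℝ → ℝ → ℝ} (hw : Smooth3 w) {z : ℝ}
    (hz : z ∈ Icc (0:ℝ) 1) :
    (∫ q in Icc (0:ℝ) L ×ˢ Icc (0:ℝ) L, w q.1 q.2 z ^ 2)
      ≤ 2 * intBox L (fun x y z =>
          w x y z ^ 2 + px w x y z ^ 2 + py w x y z ^ 2 + pz w x y z ^ 2) := by
  have hWc := cont_of_smooth hw
  have hZc := cont_pz hw
  have hreassoc : Continuous fun p : (ℝ × ℝ) × ℝ => ((p.1.1, p.1.2, p.2) : ℝ × ℝ × ℝ) :=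
    (continuous_fst.comp continuous_fst).prodMk
      ((continuous_snd.comp continuous_fst).prodMk continuous_snd)
  have hw3 : Continuous fun p : (ℝ × ℝ) × ℝ => w p.1.1 p.1.2 p.2 := hWc.comp hreassoc
  have hz3 : Continuous fun p : (ℝ × ℝ) × ℝ => pz w p.1.1 p.1.2 p.2 := hZc.comp hreassoc
  have hcontU : Continuous fun p : ℝ × ℝ × ℝ =>
      w p.1 p.2.1 p.2.2 ^ 2 + |2 * w p.1 p.2.1 p.2.2 * pz w p.1 p.2.1 p.2.2| :=
    (hWc.pow 2).add ((continuous_const.mul hWc).mul hZc).abs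
  have hcontψ : Continuous fun p : (ℝ × ℝ) × ℝ =>
      w p.1.1 p.1.2 p.2 ^ 2 + |2 * w p.1.1 p.1.2 p.2 * pz w p.1.1 p.1.2 p.2| :=
    (hw3.pow 2).add ((continuous_const.mul hw3).mul hz3).abs
  have hptw : ∀ q : ℝ × ℝ, w q.1 q.2 z ^ 2
      ≤ ∫ s in Icc (0:ℝ) 1, (w q.1 q.2 s ^ 2 + |2 * w q.1 q.2 s * pz w q.1 q.2 s|) := by
    intro q
    refine agmon1d ?_ ?_ (fun t => hasDerivAt_pz hw q.1 q.2 t) hz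
    · exact hWc.comp (continuous_const.prodMk (continuous_const.prodMk continuous_id))
    · exact hZc.comp (continuous_const.prodMk (continuous_const.prodMk continuous_id))
  have hcont1 : Continuous fun q : ℝ × ℝ => w q.1 q.2 z ^ 2 :=
    (hWc.comp (continuous_fst.prodMk (continuous_snd.prodMk continuous_const))).pow 2
  have step1 : (∫ q in Icc (0:ℝ) L ×ˢ Icc (0:ℝ) L, w q.1 q.2 z ^ 2)
      ≤ ∫ q in Icc (0:ℝ) L ×ˢ Icc (0:ℝ) L,
          ∫ s in Icc (0:ℝ) 1, (w q.1 q.2 s ^ 2 + |2 * w q.1 q.2 s * pz w q.1 q.2 s|) :=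
    setIntegral_mono_on
      (hcont1.continuousOn.integrableOn_compact (isCompact_Icc.prod isCompact_Icc))
      (integrableOn_inner hcontψ)
      (measurableSet_Icc.prod measurableSet_Icc) (fun q _ => hptw q)
  have step2 : (∫ q in Icc (0:ℝ) L ×ˢ Icc (0:ℝ) L,
        ∫ s in Icc (0:ℝ) 1, (w q.1 q.2 s ^ 2 + |2 * w q.1 q.2 s * pz w q.1 q.2 s|))
      = intBox L (fun x y s => w x y s ^ 2 + |2 * w x y s * pz w x y s|) :=
    (intBox_rep21 (fun x y s => w x y s ^ 2 + |2 * w x y s * pz w x y s|) hcontU).symm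
  have step3 : intBox L (fun x y s => w x y s ^ 2 + |2 * w x y s * pz w x y s|)
      ≤ intBox L (fun x y z =>
          2 * (w x y z ^ 2 + px w x y z ^ 2 + py w x y z ^ 2 + pz w x y z ^ 2)) := by
    refine intBox_mono hcontU
      (continuous_const.mul ((((hWc.pow 2).add ((cont_px hw).pow 2)).add
        ((cont_py hw).pow 2)).add ((cont_pz hw).pow 2))) ?_
    intro x y s _ _ _
    have habs : |2 * w x y s * pz w x y s| ≤ w x y s ^ 2 + pz w x y s ^ 2 :=
      abs_le.2 ⟨by nlinarith [sq_nonneg (w x y s + pz w x y s)],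
        by nlinarith [sq_nonneg (w x y s - pz w x y s)]⟩
    nlinarith [sq_nonneg (px w x y s), sq_nonneg (py w x y s)]
  have step4 : intBox L (fun x y z =>
        2 * (w x y z ^ 2 + px w x y z ^ 2 + py w x y z ^ 2 + pz w x y z ^ 2))
      = 2 * intBox L (fun x y z =>
          w x y z ^ 2 + px w x y z ^ 2 + py w x y z ^ 2 + pz w x y z ^ 2) :=
    intBox_const_mul L 2 _
  linarith


/-- ∫_Ω |w(x,y,z) \overline{wθ}(z)|² dxdydz ≤ C ‖w‖_{H¹}⁴ ‖θ‖_{H¹}². -/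
theorem statement12 (L : ℝ) (hL : 0 < L) :
    ∃ C > (0:ℝ), ∀ w θ : ℝ → ℝ → ℝ → ℝ,
      Smooth3 w → Smooth3 θ → Per L w → Per L θ →
      intBox L (fun x y z =>
          (w x y z * mh L (fun a b c => w a b c * θ a b c) z) ^ 2) ≤
        C * (h1 L w) ^ 4 * (h1 L θ) ^ 2 := by
  refine ⟨4 / L ^ 4, by positivity, ?_⟩
  intro w θ hw hθ _ _
  have hWc := cont_of_smooth hw
  have hΘc := cont_of_smooth hθ
  have hM0 : 0 ≤ intBox L (fun x y z =>
      w x y z ^ 2 + px w x y z ^ 2 + py w x y z ^ 2 + pz w x y z ^ 2) :=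
    intBox_nonneg fun x y z => by positivity
  have hN0 : 0 ≤ intBox L (fun x y z =>
      θ x y z ^ 2 + px θ x y z ^ 2 + py θ x y z ^ 2 + pz θ x y z ^ 2) :=
    intBox_nonneg fun x y z => by positivity
  have hMsq : h1 L w ^ 2 = intBox L (fun x y z =>
      w x y z ^ 2 + px w x y z ^ 2 + py w x y z ^ 2 + pz w x y z ^ 2) := by
    unfold h1; exact Real.sq_sqrt hM0
  have hNsq : h1 L θ ^ 2 = intBox L (fun x y z =>
      θ x y z ^ 2 + px θ x y z ^ 2 + py θ x y z ^ 2 + pz θ x y z ^ 2) := by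
    unfold h1; exact Real.sq_sqrt hN0
  set M := intBox L (fun x y z =>
      w x y z ^ 2 + px w x y z ^ 2 + py w x y z ^ 2 + pz w x y z ^ 2) with hMdef
  set N := intBox L (fun x y z =>
      θ x y z ^ 2 + px θ x y z ^ 2 + py θ x y z ^ 2 + pz θ x y z ^ 2) with hNdef
  -- the horizontal mean as a product-set integral
  have hprodc : Continuous fun p : ℝ × ℝ × ℝ => w p.1 p.2.1 p.2.2 * θ p.1 p.2.1 p.2.2 :=
    hWc.mul hΘc
  have hmrep : ∀ z, mh L (fun a b c => w a b c * θ a b c) z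
      = (1 / L ^ 2) * ∫ q in Icc (0:ℝ) L ×ˢ Icc (0:ℝ) L, w q.1 q.2 z * θ q.1 q.2 z :=
    fun z => mh_rep _ hprodc z
  have hmc : Continuous fun z : ℝ =>
      (1 / L ^ 2) * ∫ q in Icc (0:ℝ) L ×ˢ Icc (0:ℝ) L, w q.1 q.2 z * θ q.1 q.2 z := by
    refine continuous_const.mul ?_
    refine continuous_parametric_integral_of_continuous
      (f := fun (z : ℝ) (q : ℝ × ℝ) => w q.1 q.2 z * θ q.1 q.2 z) ?_
      (isCompact_Icc.prod isCompact_Icc)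
    have hmap : Continuous fun p : ℝ × ℝ × ℝ => ((p.2.1, p.2.2, p.1) : ℝ × ℝ × ℝ) :=
      (continuous_fst.comp continuous_snd).prodMk
        ((continuous_snd.comp continuous_snd).prodMk continuous_fst)
    exact (hWc.comp hmap).mul (hΘc.comp hmap)
  -- pointwise bound on the horizontal mean
  have claimM : ∀ z ∈ Icc (0:ℝ) 1,
      ((1 / L ^ 2) * ∫ q in Icc (0:ℝ) L ×ˢ Icc (0:ℝ) L, w q.1 q.2 z * θ q.1 q.2 z) ^ 2
        ≤ (1 / L ^ 2) ^ 2 * ((2 * M) * (2 * N)) := by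
    intro z hz
    have hA := slice_bound (L := L) hw hz
    have hB := slice_bound (L := L) hθ hz
    rw [← hMdef] at hA
    rw [← hNdef] at hB
    have hA0 : 0 ≤ ∫ q in Icc (0:ℝ) L ×ˢ Icc (0:ℝ) L, w q.1 q.2 z ^ 2 :=
      setIntegral_nonneg (measurableSet_Icc.prod measurableSet_Icc) fun q _ => sq_nonneg _
    have hB0 : 0 ≤ ∫ q in Icc (0:ℝ) L ×ˢ Icc (0:ℝ) L, θ q.1 q.2 z ^ 2 :=
      setIntegral_nonneg (measurableSet_Icc.prod measurableSet_Icc) fun q _ => sq_nonneg _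
    have hslice_w : Continuous fun q : ℝ × ℝ => w q.1 q.2 z :=
      hWc.comp (continuous_fst.prodMk (continuous_snd.prodMk continuous_const))
    have hslice_t : Continuous fun q : ℝ × ℝ => θ q.1 q.2 z :=
      hΘc.comp (continuous_fst.prodMk (continuous_snd.prodMk continuous_const))
    have hcs := sq_integral_mul_le
      (μ := volume.restrict (Icc (0:ℝ) L ×ˢ Icc (0:ℝ) L))
      (memL2_of_continuous hslice_w (isCompact_Icc.prod isCompact_Icc)
        (measurableSet_Icc.prod measurableSet_Icc))
      (memL2_of_continuous hslice_t (isCompact_Icc.prod isCompact_Icc)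
        (measurableSet_Icc.prod measurableSet_Icc))
    rw [mul_pow]
    have hAB : (∫ q in Icc (0:ℝ) L ×ˢ Icc (0:ℝ) L, w q.1 q.2 z * θ q.1 q.2 z) ^ 2
        ≤ (2 * M) * (2 * N) :=
      le_trans hcs (mul_le_mul hA hB hB0 (le_trans hA0 hA))
    exact mul_le_mul_of_nonneg_left hAB (by positivity)
  -- rewrite the integrand using the product representation of mh
  have heq : (fun x y z =>
        (w x y z * mh L (fun a b c => w a b c * θ a b c) z) ^ 2)
      = fun x y z => (w x y z *
          ((1 / L ^ 2) * ∫ q in Icc (0:ℝ) L ×ˢ Icc (0:ℝ) L, w q.1 q.2 z * θ q.1 q.2 z)) ^ 2 := by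
    funext x y z
    rw [hmrep z]
  rw [heq]
  have hK0 : 0 ≤ (1 / L ^ 2) ^ 2 * ((2 * M) * (2 * N)) := by
    have : 0 ≤ (2 * M) * (2 * N) := mul_nonneg (by linarith) (by linarith)
    positivity
  -- main comparison
  have hbound : intBox L (fun x y z => (w x y z *
        ((1 / L ^ 2) * ∫ q in Icc (0:ℝ) L ×ˢ Icc (0:ℝ) L, w q.1 q.2 z * θ q.1 q.2 z)) ^ 2)
      ≤ intBox L (fun x y z =>
          ((1 / L ^ 2) ^ 2 * ((2 * M) * (2 * N))) * w x y z ^ 2) := by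
    refine intBox_mono ?_ (continuous_const.mul (hWc.pow 2)) ?_
    · exact (hWc.mul (hmc.comp (continuous_snd.comp continuous_snd))).pow 2
    · intro x y z _ _ hz
      nlinarith [mul_le_mul_of_nonneg_left (claimM z hz) (sq_nonneg (w x y z))]
  have hconst : intBox L (fun x y z =>
        ((1 / L ^ 2) ^ 2 * ((2 * M) * (2 * N))) * w x y z ^ 2)
      = ((1 / L ^ 2) ^ 2 * ((2 * M) * (2 * N))) * intBox L (fun x y z => w x y z ^ 2) :=
    intBox_const_mul L _ _
  have hw2M : intBox L (fun x y z => w x y z ^ 2) ≤ M := by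
    rw [hMdef]
    refine intBox_mono (hWc.pow 2)
      ((((hWc.pow 2).add ((cont_px hw).pow 2)).add
        ((cont_py hw).pow 2)).add ((cont_pz hw).pow 2)) ?_
    intro x y z _ _ _
    nlinarith [sq_nonneg (px w x y z), sq_nonneg (py w x y z), sq_nonneg (pz w x y z)]
  have hfin : ((1 / L ^ 2) ^ 2 * ((2 * M) * (2 * N))) * M
      = 4 / L ^ 4 * h1 L w ^ 4 * h1 L θ ^ 2 := by
    have h4 : h1 L w ^ 4 = M ^ 2 := by
      rw [show (4 : ℕ) = 2 * 2 from rfl, pow_mul, hMsq]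
    rw [h4, hNsq]
    field_simp
    ring
  calc intBox L (fun x y z => (w x y z *
        ((1 / L ^ 2) * ∫ q in Icc (0:ℝ) L ×ˢ Icc (0:ℝ) L, w q.1 q.2 z * θ q.1 q.2 z)) ^ 2)
      ≤ ((1 / L ^ 2) ^ 2 * ((2 * M) * (2 * N))) * intBox L (fun x y z => w x y z ^ 2) := by
        rw [← hconst]; exact hbound
    _ ≤ ((1 / L ^ 2) ^ 2 * ((2 * M) * (2 * N))) * M := mul_le_mul_of_nonneg_left hw2M hK0
    _ = 4 / L ^ 4 * h1 L w ^ 4 * h1 L θ ^ 2 := hfin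

end RRC
end
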